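/- An ND m-code is one-sided: if X = {x₁,…,x_n} is a finite set of nonempty directed figures that is an ND m-code for some associative m, then the only non-negative integer solution of Σᵢ αᵢτ(xᵢ) = (0,0) is α₁ = ⋯ = α_n = 0. -/
import Mathlib


namespace DF

/-- A directed figure over alphabet `A`: a finitely-supported labelling of `ℤ²`
together with a start point and an end point. (Equality up to translation is
expressed by `EquivT` below.) -/
structure Fig (A : Type) where
  lab : ℤ × ℤ → Option A
  beg : ℤ × ℤ
  en : ℤ × ℤ
  finiteDom : Set.Finite {p : ℤ × ℤ | lab p ≠ none}

variable {A : Type}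

/-- The domain of a directed figure. -/
def Fig.dom (x : Fig A) : Set (ℤ × ℤ) := {p | x.lab p ≠ none}

/-- The translation vector of a directed figure. -/
def Fig.tv (x : Fig A) : ℤ × ℤ := x.en - x.beg

/-- A figure is nonempty if its domain is nonempty. -/
def Fig.NonEmpty (x : Fig A) : Prop := x.dom.Nonempty

/-- Translation of a directed figure by a vector `u`. -/
def trF (u : ℤ × ℤ) (x : Fig A) : Fig A where
  lab := fun p => x.lab (p - u)
  beg := x.beg + u
  en := x.en + u
  finiteDom := by
    apply (x.finiteDom.image (fun p => p + u)).subset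
    intro p hp
    exact ⟨p - u, hp, by simp⟩

/-- Equality of directed figures up to translation. -/
def EquivT (x y : Fig A) : Prop := ∃ u : ℤ × ℤ, trF u x = y

/-- Merging of two optional labels using merging function `m`. -/
def merge (m : A → A → A) : Option A → Option A → Option A
  | some a, some b => some (m a b)
  | some a, none => some a
  | none, b => b

/-- `m`-catenation of directed figures (always defined). -/
def mcat (m : A → A → A) (x y : Fig A) : Fig A where
  lab := fun p => merge m (x.lab p) (y.lab (p - (x.en - y.beg)))
  beg := x.beg
  en := y.en + (x.en - y.beg)
  finiteDom := by
    apply ((x.finiteDom).union ((y.finiteDom).image (fun p => p + (x.en - y.beg)))).subset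
    intro p hp
    simp only [Set.mem_union, Set.mem_setOf_eq, Set.mem_image]
    by_cases hx : x.lab p = none
    · right
      refine ⟨p - (x.en - y.beg), ?_, by simp⟩
      intro hy
      apply hp
      show merge m (x.lab p) (y.lab (p - (x.en - y.beg))) = none
      rw [hx, hy]; rfl
    · left; exact hx

/-- The underlying (total) operation of non-merging catenation; it represents
the actual catenation `x ∘ y` exactly when `CatDef x y` holds. -/
def cat (x y : Fig A) : Fig A := mcat (fun a _ => a) x y

/-- The non-merging catenation `x ∘ y` is defined iff the domain of `x` is disjoint
from the translated domain of `y`. -/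
def CatDef (x y : Fig A) : Prop :=
  Disjoint x.dom ((fun p => p + (x.en - y.beg)) '' y.dom)

/-- The empty directed figure ε. -/
def eps : Fig A :=
  { lab := fun _ => none, beg := 0, en := 0,
    finiteDom := by simp }

/-- Product (left-associated) of a list of figures under `m`-catenation. -/
def prodM (m : A → A → A) : List (Fig A) → Fig A
  | [] => eps
  | x :: l => l.foldl (mcat m) x

/-- Product (left-associated) of a list of figures under non-merging catenation. -/
def prodC : List (Fig A) → Fig A
  | [] => eps
  | x :: l => l.foldl cat x

/-- All successive catenations in `x ∘ y₁ ∘ y₂ ∘ ⋯` are defined. -/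
def ChainDef : Fig A → List (Fig A) → Prop
  | _, [] => True
  | x, y :: l => CatDef x y ∧ ChainDef (cat x y) l

/-- All catenations in the (left-associated) product of a list are defined. -/
def ProdDef : List (Fig A) → Prop
  | [] => True
  | x :: l => ChainDef x l

/-- Uniquely decipherable code (non-merging catenation). -/
def IsUDCode (X : Finset (Fig A)) : Prop :=
  ∀ xs ys : List (Fig A), xs ≠ [] → ys ≠ [] →
    (∀ a ∈ xs, a ∈ X) → (∀ a ∈ ys, a ∈ X) →
    ProdDef xs → ProdDef ys → EquivT (prodC xs) (prodC ys) → xs = ys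

/-- Multiset decipherable code (non-merging catenation). -/
def IsMSDCode (X : Finset (Fig A)) : Prop :=
  ∀ xs ys : List (Fig A), xs ≠ [] → ys ≠ [] →
    (∀ a ∈ xs, a ∈ X) → (∀ a ∈ ys, a ∈ X) →
    ProdDef xs → ProdDef ys → EquivT (prodC xs) (prodC ys) →
    (xs : Multiset (Fig A)) = (ys : Multiset (Fig A))

/-- Set decipherable code (non-merging catenation). -/
def IsSDCode (X : Finset (Fig A)) : Prop :=
  ∀ xs ys : List (Fig A), xs ≠ [] → ys ≠ [] →
    (∀ a ∈ xs, a ∈ X) → (∀ a ∈ ys, a ∈ X) →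
    ProdDef xs → ProdDef ys → EquivT (prodC xs) (prodC ys) →
    ∀ a : Fig A, a ∈ xs ↔ a ∈ ys

/-- Numerically decipherable code (non-merging catenation). -/
def IsNDCode (X : Finset (Fig A)) : Prop :=
  ∀ xs ys : List (Fig A), xs ≠ [] → ys ≠ [] →
    (∀ a ∈ xs, a ∈ X) → (∀ a ∈ ys, a ∈ X) →
    ProdDef xs → ProdDef ys → EquivT (prodC xs) (prodC ys) →
    xs.length = ys.length

/-- Uniquely decipherable `m`-code. -/
def IsUDmCode (m : A → A → A) (X : Finset (Fig A)) : Prop :=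
  ∀ xs ys : List (Fig A), xs ≠ [] → ys ≠ [] →
    (∀ a ∈ xs, a ∈ X) → (∀ a ∈ ys, a ∈ X) →
    EquivT (prodM m xs) (prodM m ys) → xs = ys

/-- Multiset decipherable `m`-code. -/
def IsMSDmCode (m : A → A → A) (X : Finset (Fig A)) : Prop :=
  ∀ xs ys : List (Fig A), xs ≠ [] → ys ≠ [] →
    (∀ a ∈ xs, a ∈ X) → (∀ a ∈ ys, a ∈ X) →
    EquivT (prodM m xs) (prodM m ys) →
    (xs : Multiset (Fig A)) = (ys : Multiset (Fig A))

/-- Set decipherable `m`-code. -/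
def IsSDmCode (m : A → A → A) (X : Finset (Fig A)) : Prop :=
  ∀ xs ys : List (Fig A), xs ≠ [] → ys ≠ [] →
    (∀ a ∈ xs, a ∈ X) → (∀ a ∈ ys, a ∈ X) →
    EquivT (prodM m xs) (prodM m ys) →
    ∀ a : Fig A, a ∈ xs ↔ a ∈ ys

/-- Numerically decipherable `m`-code. -/
def IsNDmCode (m : A → A → A) (X : Finset (Fig A)) : Prop :=
  ∀ xs ys : List (Fig A), xs ≠ [] → ys ≠ [] →
    (∀ a ∈ xs, a ∈ X) → (∀ a ∈ ys, a ∈ X) →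
    EquivT (prodM m xs) (prodM m ys) →
    xs.length = ys.length

/- ### Auxiliary lemmas -/

lemma Fig.ext' {x y : Fig A} (h1 : x.lab = y.lab) (h2 : x.beg = y.beg)
    (h3 : x.en = y.en) : x = y := by
  cases x; cases y; cases h1; cases h2; cases h3; rfl

lemma merge_assoc (m : A → A → A) (hm : ∀ a b c, m (m a b) c = m a (m b c))
    (a b c : Option A) : merge m (merge m a b) c = merge m a (merge m b c) := by
  cases a <;> cases b <;> cases c <;> simp [merge, hm]

lemma mcat_assoc (m : A → A → A) (hm : ∀ a b c, m (m a b) c = m a (m b c))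
    (x y z : Fig A) : mcat m (mcat m x y) z = mcat m x (mcat m y z) := by
  apply Fig.ext'
  · funext p
    show merge m (merge m (x.lab p) (y.lab (p - (x.en - y.beg))))
        (z.lab (p - ((y.en + (x.en - y.beg)) - z.beg)))
      = merge m (x.lab p) (merge m (y.lab (p - (x.en - y.beg)))
        (z.lab ((p - (x.en - y.beg)) - (y.en - z.beg))))
    rw [merge_assoc m hm]
    have : p - ((y.en + (x.en - y.beg)) - z.beg)
        = (p - (x.en - y.beg)) - (y.en - z.beg) := by ring
    rw [this]
  · rfl
  · show z.en + ((y.en + (x.en - y.beg)) - z.beg)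
      = (z.en + (y.en - z.beg)) + (x.en - y.beg)
    ring

lemma foldl_mcat (m : A → A → A) (hm : ∀ a b c, m (m a b) c = m a (m b c))
    (l : List (Fig A)) : ∀ v y : Fig A,
    List.foldl (mcat m) v (y :: l) = mcat m v (List.foldl (mcat m) y l) := by
  induction l with
  | nil => intro v y; rfl
  | cons z l ih =>
    intro v y
    show List.foldl (mcat m) (mcat m v y) (z :: l) = _
    rw [ih, ih, mcat_assoc m hm]

lemma prodM_append (m : A → A → A) (hm : ∀ a b c, m (m a b) c = m a (m b c))
    (x : Fig A) (l₁ l₂ : List (Fig A)) (h : l₂ ≠ []) :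
    prodM m ((x :: l₁) ++ l₂) = mcat m (prodM m (x :: l₁)) (prodM m l₂) := by
  obtain ⟨y, l₂, rfl⟩ := List.exists_cons_of_ne_nil h
  show List.foldl (mcat m) x (l₁ ++ y :: l₂) = _
  rw [List.foldl_append, foldl_mcat m hm]
  rfl

lemma tv_mcat (m : A → A → A) (x y : Fig A) :
    (mcat m x y).tv = x.tv + y.tv := by
  show (y.en + (x.en - y.beg)) - x.beg = (x.en - x.beg) + (y.en - y.beg)
  ring

lemma tv_foldl (m : A → A → A) (l : List (Fig A)) : ∀ v : Fig A,
    (List.foldl (mcat m) v l).tv = v.tv + (l.map Fig.tv).sum := by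
  induction l with
  | nil => intro v; simp
  | cons y l ih =>
    intro v
    show (List.foldl (mcat m) (mcat m v y) l).tv = _
    rw [ih, tv_mcat]
    simp [add_assoc]

/-- Powers of a figure under `m`-catenation (`pw m w k = w^(k+1)`). -/
def pw (m : A → A → A) (w : Fig A) : ℕ → Fig A
  | 0 => w
  | k + 1 => mcat m w (pw m w k)

lemma pw_beg (m : A → A → A) (w : Fig A) (k : ℕ) : (pw m w k).beg = w.beg := by
  cases k <;> rfl

lemma pw_en (m : A → A → A) (w : Fig A) (hw : w.en = w.beg) (k : ℕ) :
    (pw m w k).en = w.en := by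
  induction k with
  | zero => rfl
  | succ k ih =>
    show (pw m w k).en + (w.en - (pw m w k).beg) = w.en
    rw [ih, pw_beg, hw]
    ring

lemma pw_lab (m : A → A → A) (w : Fig A) (hw : w.en = w.beg) (k : ℕ) (p : ℤ × ℤ) :
    (pw m w (k + 1)).lab p = merge m (w.lab p) ((pw m w k).lab p) := by
  show merge m (w.lab p) ((pw m w k).lab (p - (w.en - (pw m w k).beg))) = _
  rw [pw_beg, hw, sub_self, sub_zero]

lemma pw_lab_none (m : A → A → A) (w : Fig A) (hw : w.en = w.beg) (k : ℕ)
    (p : ℤ × ℤ) (hp : w.lab p = none) : (pw m w k).lab p = none := by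
  induction k with
  | zero => exact hp
  | succ k ih => rw [pw_lab m w hw, hp, ih]; rfl

lemma prodM_flatten_replicate (m : A → A → A)
    (hm : ∀ a b c, m (m a b) c = m a (m b c)) (x : Fig A) (l : List (Fig A))
    (k : ℕ) : prodM m ((List.replicate (k + 1) (x :: l)).flatten)
      = pw m (prodM m (x :: l)) k := by
  induction k with
  | zero => simp [pw]
  | succ k ih =>
    have h1 : (List.replicate (k + 2) (x :: l)).flatten
        = (x :: l) ++ (List.replicate (k + 1) (x :: l)).flatten := by
      rw [List.replicate_succ, List.flatten_cons]
    have h2 : (List.replicate (k + 1) (x :: l)).flatten ≠ [] := by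
      rw [List.replicate_succ, List.flatten_cons]
      simp
    rw [h1, prodM_append m hm _ _ _ h2, ih]
    rfl

lemma trF_zero (x : Fig A) : trF 0 x = x := by
  apply Fig.ext'
  · funext p; show x.lab (p - 0) = x.lab p; rw [sub_zero]
  · show x.beg + 0 = x.beg; rw [add_zero]
  · show x.en + 0 = x.en; rw [add_zero]

lemma sum_tv_flatMap (α : Fig A → ℕ) (ls : List (Fig A)) :
    (((ls.flatMap fun x => List.replicate (α x) x).map Fig.tv)).sum
      = (ls.map fun x => (α x) • x.tv).sum := by
  induction ls with
  | nil => rfl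
  | cons x ls ih =>
    rw [List.flatMap_cons, List.map_append, List.sum_append, ih,
      List.map_replicate, List.sum_replicate, List.map_cons, List.sum_cons]

/-- An ND `m`-code is one-sided: the only non-negative integer solution of
`∑ αᵢ τ(xᵢ) = (0,0)` is the trivial one. -/
theorem stmt8 {A : Type} [Finite A] (X : Finset (Fig A)) (hX : X.Nonempty)
    (hne : ∀ x ∈ X, Fig.NonEmpty x)
    (m : A → A → A) (hm : ∀ a b c, m (m a b) c = m a (m b c))
    (hcode : IsNDmCode m X) :
    ∀ α : Fig A → ℕ, ∑ x ∈ X, (α x) • x.tv = (0 : ℤ × ℤ) →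
      ∀ x ∈ X, α x = 0 := by
  intro α hsum x₀ hx₀
  by_contra hα0
  -- the word `L` realizing the relation
  set L : List (Fig A) := X.toList.flatMap (fun x => List.replicate (α x) x)
    with hLdef
  have hx₀L : x₀ ∈ L := by
    refine List.mem_flatMap.mpr ⟨x₀, Finset.mem_toList.mpr hx₀, ?_⟩
    exact List.mem_replicate.mpr ⟨hα0, rfl⟩
  have hLne : L ≠ [] := List.ne_nil_of_mem hx₀L
  have hmemL : ∀ a ∈ L, a ∈ X := by
    intro a ha
    obtain ⟨x, hx, hax⟩ := List.mem_flatMap.mp ha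
    rw [List.eq_of_mem_replicate hax]
    exact Finset.mem_toList.mp hx
  obtain ⟨x, l, hxl⟩ := List.exists_cons_of_ne_nil hLne
  set w : Fig A := prodM m L with hwdef
  -- `w` has zero translation vector
  have htv : w.tv = 0 := by
    have h1 : w.tv = (L.map Fig.tv).sum := by
      rw [hwdef, hxl]
      show (List.foldl (mcat m) x l).tv = _
      rw [tv_foldl]
      simp [Fig.tv]
    rw [h1, hLdef, sum_tv_flatMap, Finset.sum_map_toList, hsum]
  have hw : w.en = w.beg := by
    have := htv
    rw [Fig.tv, sub_eq_zero] at this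
    exact this
  -- the powers of `w` live in a finite set: pigeonhole
  haveI : Fintype A := Fintype.ofFinite A
  haveI hfinA : Finite (Option A) := inferInstance
  have hfinD : Finite ↥w.dom := w.finiteDom.to_subtype
  obtain ⟨i, j, hij, hfeq⟩ := Finite.exists_ne_map_eq_of_infinite
    (fun k : ℕ => fun p : ↥w.dom => (pw m w k).lab p)
  have hpweq : pw m w i = pw m w j := by
    apply Fig.ext'
    · funext p
      by_cases hp : p ∈ w.dom
      · exact congrFun hfeq ⟨p, hp⟩
      · have hpn : w.lab p = none := not_not.mp hp
        rw [pw_lab_none m w hw i p hpn, pw_lab_none m w hw j p hpn]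
    · rw [pw_beg, pw_beg]
    · rw [pw_en m w hw, pw_en m w hw]
  -- two equal products of different lengths: contradiction with ND
  have key : ∀ k : ℕ, ((List.replicate (k + 1) L).flatten).length
      = (k + 1) * L.length := by
    intro k
    rw [List.length_flatten, List.map_replicate, List.sum_replicate, smul_eq_mul]
  have hflne : ∀ k : ℕ, (List.replicate (k + 1) L).flatten ≠ [] := by
    intro k h
    have : L.length = 0 := by
      have := congrArg List.length h
      rw [key k] at this
      simpa using this
    exact hLne (List.length_eq_zero_iff.mp this)
  have hflmem : ∀ k : ℕ, ∀ a ∈ (List.replicate (k + 1) L).flatten, a ∈ X := by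
    intro k a ha
    obtain ⟨l', hl', hal'⟩ := List.mem_flatten.mp ha
    rw [List.eq_of_mem_replicate hl'] at hal'
    exact hmemL a hal'
  have hlen := hcode ((List.replicate (i + 1) L).flatten)
    ((List.replicate (j + 1) L).flatten) (hflne i) (hflne j)
    (hflmem i) (hflmem j) ?_
  · rw [key i, key j] at hlen
    have hLpos : 0 < L.length := by rw [hxl]; simp
    have : i + 1 = j + 1 := Nat.eq_of_mul_eq_mul_right hLpos hlen
    exact hij (Nat.succ_injective this)
  · refine ⟨0, ?_⟩
    rw [trF_zero]
    rw [hxl, prodM_flatten_replicate m hm, prodM_flatten_replicate m hm,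
      ← hxl, ← hwdef, hpweq]

end DF
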